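/- Let K_A = (S_A, S_A⁰, δ_A, AP, L_A) and K_B = (S_B, S_B⁰, δ_B, AP, L_B) be Kripke structures and Pred ⊆ 2^AP × 2^AP a relational predicate. Suppose there exist n ≥ 1, states x_1, …, x_n ∈ S_A, an index 1 ≤ j ≤ n, and a relation T ⊆ S_A × S_B such that: (1) x_1 ∈ S_A⁰; (2) (x_i, x_{i+1}) ∈ δ_A for all 1 ≤ i < n, and (x_n, x_j) ∈ δ_A; (3) (x_1, y) ∈ T for every y ∈ S_B⁰; (4) for every 1 ≤ i < n, every y with (x_i, y) ∈ T and every y' with (y, y') ∈ δ_B, (x_{i+1}, y') ∈ T; (5) for every y with (x_n, y) ∈ T and every y' with (y, y') ∈ δ_B, (x_j, y') ∈ T; (6) Pred(L_A(x), L_B(y)) holds for every (x, y) ∈ T. Then the lasso trace t of the lasso path x_1, …, x_n with loopback index j satisfies: for every trace t' ∈ Traces(K_B) and every i ∈ ℕ, Pred(t(i), t'(i)) holds; hence ⟨K_A, K_B⟩ ⊨ ∃π.∀π'. □Pred. (This is the soundness of the SAT encoding φ_EA^{n,k}: its satisfiability implies the existence of an EA-simulation and hence satisfaction of the hyperproperty.)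 -/
import Mathlib


/-- A Kripke structure over state type `S` and atomic propositions `α`:
a nonempty set of initial states, a total transition relation, and a labeling. -/
structure Kripke (S : Type) (α : Type) where
  init : Set S
  init_nonempty : init.Nonempty
  delta : S → S → Prop
  total : ∀ s, ∃ s', delta s s'
  L : S → Set α

/-- A path of a Kripke structure. -/
def Kripke.IsPath {S α : Type} (K : Kripke S α) (p : ℕ → S) : Prop :=
  p 0 ∈ K.init ∧ ∀ i, K.delta (p i) (p (i + 1))

/-- The set of traces of a Kripke structure. -/
def Kripke.Traces {S α : Type} (K : Kripke S α) : Set (ℕ → Set α) :=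
  {t | ∃ p, K.IsPath p ∧ ∀ i, t i = K.L (p i)}


def lassoIdx (n j i : ℕ) : ℕ :=
  if i + 1 ≤ n then i + 1 else j + (i + 1 - j) % (n + 1 - j)

lemma succ_mod_aux (a m : ℕ) (hm : 0 < m) :
    (a + 1) % m = if a % m + 1 = m then 0 else a % m + 1 := by
  have hd := Nat.div_add_mod a m
  have hr := Nat.mod_lt a hm
  have h1 : a + 1 = m * (a / m) + (a % m + 1) := by omega
  rw [h1, Nat.mul_add_mod]
  split
  · next h => rw [h, Nat.mod_self]
  · next h => exact Nat.mod_eq_of_lt (by omega)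

lemma lassoIdx_bounds (n j : ℕ) (hn : 1 ≤ n) (hj1 : 1 ≤ j) (hjn : j ≤ n) (i : ℕ) :
    1 ≤ lassoIdx n j i ∧ lassoIdx n j i ≤ n := by
  unfold lassoIdx
  split
  · omega
  · have hr : (i + 1 - j) % (n + 1 - j) < n + 1 - j := Nat.mod_lt _ (by omega)
    omega

lemma lassoIdx_step (n j : ℕ) (hn : 1 ≤ n) (hj1 : 1 ≤ j) (hjn : j ≤ n) (i : ℕ) :
    lassoIdx n j (i + 1) = if lassoIdx n j i = n then j else lassoIdx n j i + 1 := by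
  have hm : 0 < n + 1 - j := by omega
  unfold lassoIdx
  by_cases h1 : i + 1 + 1 ≤ n
  · rw [if_pos h1, if_pos (by omega : i + 1 ≤ n), if_neg (by omega)]
  · by_cases h2 : i + 1 ≤ n
    · have hin : i + 1 = n := by omega
      rw [if_neg h1, if_pos h2, if_pos hin]
      have : i + 1 + 1 - j = n + 1 - j := by omega
      rw [this, Nat.mod_self]; omega
    · have ha : i + 1 + 1 - j = (i + 1 - j) + 1 := by omega
      rw [if_neg h1, if_neg h2, ha, succ_mod_aux _ _ hm]
      have hr : (i + 1 - j) % (n + 1 - j) < n + 1 - j := Nat.mod_lt _ hm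
      split
      · next h => rw [if_pos (by omega)]; omega
      · next h => rw [if_neg (by omega)]; omega


/-- Soundness of the SAT encoding `φ_EA^{n,k}`: a satisfying assignment, i.e. a lasso
path `x 1, …, x n` of `K_A` with loopback index `j` and a relation `T` satisfying the
constraints (1)–(6), yields a lasso trace of `K_A` matching every trace of `K_B`
pointwise w.r.t. `Pred`; hence `⟨K_A, K_B⟩ ⊨ ∃π.∀π\'. □Pred`. -/
theorem phiEA_encoding_sound {S₁ S₂ α : Type} [Fintype S₁] [Fintype S₂] [Fintype α]
    (KA : Kripke S₁ α) (KB : Kripke S₂ α) (Pred : Set α → Set α → Prop)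
    (x : ℕ → S₁) (n j : ℕ) (hn : 1 ≤ n) (hj1 : 1 ≤ j) (hjn : j ≤ n)
    (hx1 : x 1 ∈ KA.init)
    (h2a : ∀ i, 1 ≤ i → i < n → KA.delta (x i) (x (i + 1)))
    (h2b : KA.delta (x n) (x j))
    (T : S₁ → S₂ → Prop)
    (h3 : ∀ y ∈ KB.init, T (x 1) y)
    (h4 : ∀ i, 1 ≤ i → i < n → ∀ y y', T (x i) y → KB.delta y y' → T (x (i + 1)) y')
    (h5 : ∀ y y', T (x n) y → KB.delta y y' → T (x j) y')
    (h6 : ∀ a b, T a b → Pred (KA.L a) (KB.L b)) :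
    (∀ t' ∈ KB.Traces, ∀ i,
      Pred (KA.L (x (if i + 1 ≤ n then i + 1 else j + (i + 1 - j) % (n + 1 - j))))
        (t' i)) ∧
    (∃ t ∈ KA.Traces, ∀ t' ∈ KB.Traces, ∀ i, Pred (t i) (t' i)) := by
  have h0 : lassoIdx n j 0 = 1 := by unfold lassoIdx; rw [if_pos (by omega)]
  have key : ∀ q, KB.IsPath q → ∀ i, T (x (lassoIdx n j i)) (q i) := by
    intro q hq i
    induction i with
    | zero => rw [h0]; exact h3 _ hq.1
    | succ i ih =>
      rw [lassoIdx_step n j hn hj1 hjn i]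
      have hb := lassoIdx_bounds n j hn hj1 hjn i
      by_cases h : lassoIdx n j i = n
      · rw [if_pos h]
        exact h5 _ _ (h ▸ ih) (hq.2 i)
      · rw [if_neg h]
        exact h4 _ hb.1 (by omega) _ _ ih (hq.2 i)
  have path : KA.IsPath (fun i => x (lassoIdx n j i)) := by
    constructor
    · simpa [h0] using hx1
    · intro i
      have hb := lassoIdx_bounds n j hn hj1 hjn i
      simp only []
      rw [lassoIdx_step n j hn hj1 hjn i]
      by_cases h : lassoIdx n j i = n
      · rw [if_pos h, h]; exact h2b
      · rw [if_neg h]; exact h2a _ hb.1 (by omega)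
  have main : ∀ t' ∈ KB.Traces, ∀ i,
      Pred (KA.L (x (lassoIdx n j i))) (t' i) := by
    intro t' ht' i
    obtain ⟨q, hq, hqt⟩ := ht'
    rw [hqt i]
    exact h6 _ _ (key q hq i)
  refine ⟨main, fun i => KA.L (x (lassoIdx n j i)), ⟨_, path, fun i => rfl⟩, ?_⟩
  intro t' ht' i
  exact main t' ht' i
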